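/- arXiv:1610.08739 — 2 statements merged into one kernel-verified Lean document; each statement's English description precedes it below -/
import Mathlib

section
/- Let b be a block of a finite simple graph G and let u ≠ v be two vertices of b. Then every path in G from u to v contains at least one edge of b. -/
/-- A vertex `v` of a subgraph `B` is a cutvertex if deleting it increases the number of
connected components of `B`. -/
def SimpleGraph.Subgraph.IsCutvertex {V : Type*} {G : SimpleGraph V}
    (B : G.Subgraph) (v : V) : Prop :=
  v ∈ B.verts ∧
    Nat.card B.coe.ConnectedComponent <
      Nat.card (B.deleteVerts {v}).coe.ConnectedComponent

/-- A block of `G` is a maximal connected subgraph of `G` without a cutvertex. -/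
def SimpleGraph.Subgraph.IsBlock {V : Type*} {G : SimpleGraph V}
    (B : G.Subgraph) : Prop :=
  B.Connected ∧ (∀ v, ¬ B.IsCutvertex v) ∧
    ∀ B' : G.Subgraph, B ≤ B' → B'.Connected → (∀ v, ¬ B'.IsCutvertex v) → B' = B

/-!
If `p` is a path between two vertices of a block `b`, then `b ⊔ p` is still connected and
still has no cutvertex: after deleting a vertex `w`, every vertex of `p` other than `w` is
joined to `u` or to `v` along the part of `p` on one side of it, and that part avoids `w`
because `p` visits `w` only once. By maximality `b ⊔ p = b`, so `p` lies in `b`, and a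
nontrivial path has an edge.
-/

namespace SimpleGraph

variable {V : Type*} {G : SimpleGraph V}

lemma preconnected_iff_subsingleton_connectedComponent :
    G.Preconnected ↔ Subsingleton G.ConnectedComponent :=
  ⟨Preconnected.subsingleton_connectedComponent,
    fun _ _ _ => ConnectedComponent.eq.mp (Subsingleton.elim _ _)⟩

lemma preconnected_iff_card_connectedComponent_le_one [Finite V] :
    G.Preconnected ↔ Nat.card G.ConnectedComponent ≤ 1 := by
  rw [preconnected_iff_subsingleton_connectedComponent, Finite.card_le_one_iff_subsingleton]

lemma Connected.card_connectedComponent (h : G.Connected) :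
    Nat.card G.ConnectedComponent = 1 :=
  Nat.card_eq_one_iff_unique.mpr
    ⟨h.preconnected.subsingleton_connectedComponent, h.nonempty.map G.connectedComponentMk⟩

namespace Walk

variable {u v x w : V}

lemma IsPath.notMem_support_takeUntil_or_dropUntil [DecidableEq V] {p : G.Walk u v}
    (hp : p.IsPath) (hx : x ∈ p.support) (hwx : w ≠ x) :
    w ∉ (p.takeUntil x hx).support ∨ w ∉ (p.dropUntil x hx).support := by
  have hnd := hp.support_nodup
  rw [← p.take_spec hx, support_append] at hnd
  rw [← not_and_or]
  rintro ⟨hw₁, hw₂⟩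
  rw [← cons_tail_support, List.mem_cons] at hw₂
  exact List.disjoint_of_nodup_append hnd hw₁ (hw₂.resolve_left hwx)

lemma IsPath.exists_walk_to_endpoint_avoiding {p : G.Walk u v} (hp : p.IsPath)
    (hx : x ∈ p.support) (hwx : w ≠ x) :
    ∃ y, (y = u ∨ y = v) ∧
      ∃ q : G.Walk x y, q.toSubgraph ≤ p.toSubgraph ∧ w ∉ q.support := by
  classical
  have hsplit := congrArg Walk.toSubgraph (p.take_spec hx)
  rw [toSubgraph_append] at hsplit
  rcases hp.notMem_support_takeUntil_or_dropUntil hx hwx with h | h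
  · exact ⟨u, .inl rfl, (p.takeUntil x hx).reverse, by simp [← hsplit],
      by simpa using h⟩
  · exact ⟨v, .inr rfl, p.dropUntil x hx, hsplit ▸ le_sup_right, h⟩

end Walk

namespace Subgraph

variable {u v w : V}

lemma le_induce_of_le {H K : G.Subgraph} {s : Set V} (hle : H ≤ K) (hs : H.verts ⊆ s) :
    H ≤ K.induce s :=
  ⟨fun _ hx => hs hx,
    fun _ _ h => ⟨hs (H.edge_vert h), hs (H.edge_vert h.symm), hle.2 h⟩⟩

lemma deleteVerts_singleton_of_notMem {H : G.Subgraph} (hw : w ∉ H.verts) :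
    H.deleteVerts {w} = H := by
  rw [← deleteVerts_inter_verts_left_eq, Set.inter_singleton_eq_empty.mpr hw, deleteVerts_empty]

lemma Connected.not_isCutvertex_iff [Finite V] {B : G.Subgraph} (hB : B.Connected) :
    ¬ B.IsCutvertex w ↔ (B.deleteVerts {w}).Preconnected := by
  by_cases hw : w ∈ B.verts
  · rw [IsCutvertex, hB.coe.card_connectedComponent, Subgraph.preconnected_iff,
      preconnected_iff_card_connectedComponent_le_one]
    simp [hw]
  · simp only [IsCutvertex, hw, false_and, not_false_eq_true, true_iff,
      deleteVerts_singleton_of_notMem hw]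
    exact hB.preconnected

lemma Preconnected.sup_toSubgraph_deleteVerts {B : G.Subgraph} {p : G.Walk u v}
    (hp : p.IsPath) (hu : u ∈ B.verts) (hv : v ∈ B.verts)
    (hB : (B.deleteVerts {w}).Preconnected) :
    ((B ⊔ p.toSubgraph).deleteVerts {w}).Preconnected := by
  set D := (B ⊔ p.toSubgraph).deleteVerts {w}
  have reach : ∀ x ∈ D.verts,
      ∃ y ∈ (B.deleteVerts {w}).verts, ∃ q : G.Walk x y, q.toSubgraph ≤ D := by
    rintro x ⟨hx | hx, hxw⟩
    · exact ⟨x, ⟨hx, hxw⟩, .nil, by simpa using ⟨Or.inl hx, hxw⟩⟩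
    · obtain ⟨y, hy, q, hqp, hwq⟩ := hp.exists_walk_to_endpoint_avoiding
        (p.mem_verts_toSubgraph.mp hx) (Ne.symm hxw)
      have hyw : y ∉ ({w} : Set V) := fun h => hwq (h ▸ q.end_mem_support)
      refine ⟨y, ⟨by rcases hy with rfl | rfl <;> assumption, hyw⟩, q,
        le_induce_of_le (hqp.trans le_sup_right) fun z hz => ⟨?_, ?_⟩⟩
      · exact Or.inr (hqp.1 hz)
      · rintro rfl
        exact hwq (q.mem_verts_toSubgraph.mp hz)
  rw [preconnected_iff_forall_exists_walk_subgraph]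
  intro x x' hx hx'
  obtain ⟨y, hy, q, hq⟩ := reach x hx
  obtain ⟨y', hy', q', hq'⟩ := reach x' hx'
  obtain ⟨r, hr⟩ := (preconnected_iff_forall_exists_walk_subgraph _).mp hB hy hy'
  have hrD : r.toSubgraph ≤ D := hr.trans (deleteVerts_mono le_sup_left)
  exact ⟨q.append (r.append q'.reverse), by simp [hq, hq', hrD]⟩

theorem IsBlock.toSubgraph_le [Finite V] {b : G.Subgraph} (hb : b.IsBlock) {p : G.Walk u v}
    (hp : p.IsPath) (hu : u ∈ b.verts) (hv : v ∈ b.verts) : p.toSubgraph ≤ b := by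
  obtain ⟨hbc, hbnc, hbmax⟩ := hb
  have hconn : (b ⊔ p.toSubgraph).Connected := connected_sup hbc.preconnected
    p.toSubgraph_connected.preconnected ⟨u, hu, p.start_mem_verts_toSubgraph⟩
  have hnc : ∀ w, ¬ (b ⊔ p.toSubgraph).IsCutvertex w := fun w =>
    hconn.not_isCutvertex_iff.mpr
      ((hbc.not_isCutvertex_iff.mp (hbnc w)).sup_toSubgraph_deleteVerts hp hu hv)
  exact sup_eq_left.mp (hbmax _ le_sup_left hconn hnc)

end Subgraph

end SimpleGraph

open SimpleGraph in
/-- If `b` is a block of `G` and `u ≠ v` are vertices of `b`, then every path of `G`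
from `u` to `v` contains at least one edge of `b`. -/
theorem path_between_block_vertices_uses_block_edge {V : Type*} [Fintype V]
    (G : SimpleGraph V) (b : G.Subgraph) (hb : b.IsBlock)
    (u v : V) (hu : u ∈ b.verts) (hv : v ∈ b.verts) (huv : u ≠ v)
    (p : G.Walk u v) (hp : p.IsPath) :
    ∃ e ∈ p.edges, e ∈ b.edgeSet := by
  obtain ⟨e, he⟩ := List.exists_mem_of_ne_nil p.edges
    (Walk.edges_eq_nil.not.mpr (Walk.not_nil_of_ne huv))
  exact ⟨e, he, Subgraph.edgeSet_mono (hb.toSubgraph_le hp hu hv)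
    (p.mem_edges_toSubgraph.mpr he)⟩
end

section
/- Let G and H be finite simple graphs, let φ₁ : G[S₁] → H[T₁] and φ₂ : G[S₂] → H[T₂] be common induced subgraph isomorphisms with S₁ ∩ S₂ = {c} and T₁ ∩ T₂ = {c̄} for vertices c of G and c̄ of H satisfying φ₁(c) = φ₂(c) = c̄. Suppose G has no edge joining a vertex of S₁ \ {c} to a vertex of S₂ \ {c}, and H has no edge joining a vertex of T₁ \ {c̄} to a vertex of T₂ \ {c̄}. Then the map φ : S₁ ∪ S₂ → T₁ ∪ T₂ that agrees with φ₁ on S₁ and with φ₂ on S₂ is a well-defined common induced subgraph isomorphism from G[S₁ ∪ S₂] to H[T₁ ∪ T₂]; moreover, if G[S₁] and G[S₂] are connected, then G[S₁ ∪ S₂] is connected. -/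
/-- Gluing two common induced subgraph isomorphisms at a single shared vertex yields a
common induced subgraph isomorphism of the unions; moreover connectivity is preserved. -/
theorem glue_common_induced_isos {V W : Type*} [Fintype V] [Fintype W]
    (G : SimpleGraph V) (H : SimpleGraph W)
    (S₁ S₂ : Set V) (T₁ T₂ : Set W) (c : V) (cbar : W)
    (hS : S₁ ∩ S₂ = {c}) (hT : T₁ ∩ T₂ = {cbar})
    (hc₁ : c ∈ S₁) (hc₂ : c ∈ S₂)
    (φ₁ : G.induce S₁ ≃g H.induce T₁) (φ₂ : G.induce S₂ ≃g H.induce T₂)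
    (hφ₁ : (φ₁ ⟨c, hc₁⟩ : W) = cbar) (hφ₂ : (φ₂ ⟨c, hc₂⟩ : W) = cbar)
    (hGedge : ∀ x ∈ S₁, ∀ y ∈ S₂, x ≠ c → y ≠ c → ¬ G.Adj x y)
    (hHedge : ∀ x ∈ T₁, ∀ y ∈ T₂, x ≠ cbar → y ≠ cbar → ¬ H.Adj x y) :
    (∃ φ : G.induce (S₁ ∪ S₂) ≃g H.induce (T₁ ∪ T₂),
      (∀ x (hx : x ∈ S₁),
        (φ ⟨x, Set.mem_union_left S₂ hx⟩ : W) = (φ₁ ⟨x, hx⟩ : W)) ∧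
      (∀ x (hx : x ∈ S₂),
        (φ ⟨x, Set.mem_union_right S₁ hx⟩ : W) = (φ₂ ⟨x, hx⟩ : W))) ∧
    ((G.induce S₁).Connected → (G.induce S₂).Connected →
      (G.induce (S₁ ∪ S₂)).Connected) := by
  classical
  have hcbar₁ : cbar ∈ T₁ := hφ₁ ▸ (φ₁ ⟨c, hc₁⟩).2
  have hcbar₂ : cbar ∈ T₂ := hφ₂ ▸ (φ₂ ⟨c, hc₂⟩).2
  have hScap : ∀ x, x ∈ S₁ → x ∈ S₂ → x = c := by
    intro x h1 h2
    have : x ∈ S₁ ∩ S₂ := ⟨h1, h2⟩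
    rwa [hS] at this
  have hTcap : ∀ y, y ∈ T₁ → y ∈ T₂ → y = cbar := by
    intro y h1 h2
    have : y ∈ T₁ ∩ T₂ := ⟨h1, h2⟩
    rwa [hT] at this
  have hφ₁c : ∀ (x : V) (hx : x ∈ S₁), (φ₁ ⟨x, hx⟩ : W) = cbar → x = c := by
    intro x hx h
    have : (⟨x, hx⟩ : S₁) = ⟨c, hc₁⟩ := φ₁.injective (Subtype.ext (h.trans hφ₁.symm))
    exact congrArg Subtype.val this
  have hφ₂c : ∀ (x : V) (hx : x ∈ S₂), (φ₂ ⟨x, hx⟩ : W) = cbar → x = c := by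
    intro x hx h
    have : (⟨x, hx⟩ : S₂) = ⟨c, hc₂⟩ := φ₂.injective (Subtype.ext (h.trans hφ₂.symm))
    exact congrArg Subtype.val this
  have hψ₂c : ∀ (y : W) (hy : y ∈ T₂), ((φ₂.symm ⟨y, hy⟩ : V) = c) → y = cbar := by
    intro y hy h
    have h2 : φ₂ (φ₂.symm ⟨y, hy⟩) = ⟨y, hy⟩ := φ₂.apply_symm_apply _
    have h3 : φ₂.symm ⟨y, hy⟩ = ⟨c, hc₂⟩ := Subtype.ext h
    rw [h3] at h2
    have := congrArg Subtype.val h2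
    simpa [hφ₂] using this.symm
  -- forward map
  set f : ↥(S₁ ∪ S₂) → ↥(T₁ ∪ T₂) := fun x =>
    if h : (x : V) ∈ S₁ then ⟨φ₁ ⟨x, h⟩, Or.inl (φ₁ ⟨x, h⟩).2⟩
    else ⟨φ₂ ⟨x, x.2.resolve_left h⟩, Or.inr (φ₂ ⟨x, x.2.resolve_left h⟩).2⟩ with hf
  set g : ↥(T₁ ∪ T₂) → ↥(S₁ ∪ S₂) := fun y =>
    if h : (y : W) ∈ T₁ then ⟨φ₁.symm ⟨y, h⟩, Or.inl (φ₁.symm ⟨y, h⟩).2⟩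
    else ⟨φ₂.symm ⟨y, y.2.resolve_left h⟩, Or.inr (φ₂.symm ⟨y, y.2.resolve_left h⟩).2⟩ with hg
  have hleft : Function.LeftInverse g f := by
    intro x
    by_cases h : (x : V) ∈ S₁
    · have hfx : f x = ⟨φ₁ ⟨x, h⟩, Or.inl (φ₁ ⟨x, h⟩).2⟩ := by rw [hf]; simp [h]
      rw [hfx, hg]
      simp only [(φ₁ ⟨x, h⟩).2, dif_pos]
      apply Subtype.ext
      have h5 : φ₁.symm ⟨(φ₁ ⟨x, h⟩ : W), (φ₁ ⟨x, h⟩).2⟩ = ⟨x, h⟩ := by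
        have := φ₁.symm_apply_apply ⟨x, h⟩
        convert this using 2
      rw [h5]
    · have hx2 : (x : V) ∈ S₂ := x.2.resolve_left h
      have hfx : f x = ⟨φ₂ ⟨x, hx2⟩, Or.inr (φ₂ ⟨x, hx2⟩).2⟩ := by rw [hf]; simp [h]
      have hxc : (x : V) ≠ c := fun hxc => h (hxc ▸ hc₁)
      have hnT₁ : (φ₂ ⟨x, hx2⟩ : W) ∉ T₁ := by
        intro hmem
        exact hxc (hφ₂c x hx2 (hTcap _ hmem (φ₂ ⟨x, hx2⟩).2))
      rw [hfx, hg]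
      apply Subtype.ext
      beta_reduce
      rw [dif_neg hnT₁]
      show ((φ₂.symm (φ₂ ⟨(x : V), hx2⟩) : S₂) : V) = (x : V)
      rw [φ₂.symm_apply_apply]
  have hright : Function.RightInverse g f := by
    intro y
    by_cases h : (y : W) ∈ T₁
    · have hgy : g y = ⟨φ₁.symm ⟨y, h⟩, Or.inl (φ₁.symm ⟨y, h⟩).2⟩ := by rw [hg]; simp [h]
      rw [hgy, hf]
      simp only [(φ₁.symm ⟨y, h⟩).2, dif_pos]
      apply Subtype.ext
      have h5 : φ₁ ⟨(φ₁.symm ⟨y, h⟩ : V), (φ₁.symm ⟨y, h⟩).2⟩ = ⟨y, h⟩ := by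
        have := φ₁.apply_symm_apply ⟨y, h⟩
        convert this using 2
      rw [h5]
    · have hy2 : (y : W) ∈ T₂ := y.2.resolve_left h
      have hgy : g y = ⟨φ₂.symm ⟨y, hy2⟩, Or.inr (φ₂.symm ⟨y, hy2⟩).2⟩ := by rw [hg]; simp [h]
      have hyc : (y : W) ≠ cbar := fun hyc => h (hyc ▸ hcbar₁)
      have hnS₁ : (φ₂.symm ⟨y, hy2⟩ : V) ∉ S₁ := by
        intro hmem
        exact hyc (hψ₂c y hy2 (hScap _ hmem (φ₂.symm ⟨y, hy2⟩).2))
      rw [hgy, hf]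
      apply Subtype.ext
      beta_reduce
      rw [dif_neg hnS₁]
      show ((φ₂ (φ₂.symm ⟨(y : W), hy2⟩) : T₂) : W) = (y : W)
      rw [φ₂.apply_symm_apply]
  -- values of f
  have hf₁ : ∀ (x : V) (hx : x ∈ S₁) (hx' : x ∈ S₁ ∪ S₂),
      (f ⟨x, hx'⟩ : W) = (φ₁ ⟨x, hx⟩ : W) := by
    intro x hx hx'
    rw [hf]
    simp [hx]
  have hf₂ : ∀ (x : V) (hx : x ∈ S₂) (hx' : x ∈ S₁ ∪ S₂),
      (f ⟨x, hx'⟩ : W) = (φ₂ ⟨x, hx⟩ : W) := by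
    intro x hx hx'
    by_cases h : x ∈ S₁
    · have hxc : x = c := hScap x h hx
      subst hxc
      rw [hf]
      simp only [dif_pos h]
      rw [hφ₂]
      exact hφ₁
    · rw [hf]; simp [h]
  -- adjacency preservation, mixed case
  have mixed : ∀ (x y : V) (hx : x ∈ S₁) (hy : y ∈ S₂), y ∉ S₁ →
      (H.Adj (φ₁ ⟨x, hx⟩ : W) (φ₂ ⟨y, hy⟩ : W) ↔ G.Adj x y) := by
    intro x y hx hy hyn
    have hyc : y ≠ c := fun h => hyn (h ▸ hc₁)
    have hφ₂yc : (φ₂ ⟨y, hy⟩ : W) ≠ cbar := fun h => hyc (hφ₂c y hy h)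
    constructor
    · intro hadj
      have hx1 : (φ₁ ⟨x, hx⟩ : W) = cbar := by
        by_contra hne
        exact hHedge _ (φ₁ ⟨x, hx⟩).2 _ (φ₂ ⟨y, hy⟩).2 hne hφ₂yc hadj
      have hxc : x = c := hφ₁c x hx hx1
      subst hxc
      have h2 : (H.induce T₂).Adj (φ₂ ⟨x, hc₂⟩) (φ₂ ⟨y, hy⟩) := by
        rw [SimpleGraph.comap_adj]
        simpa [hφ₂, hx1] using hadj
      exact φ₂.map_rel_iff.mp h2
    · intro hadj
      have hxc : x = c := by
        by_contra hne
        exact hGedge x hx y hy hne hyc hadj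
      subst hxc
      have h2 : (G.induce S₂).Adj ⟨x, hc₂⟩ ⟨y, hy⟩ := hadj
      have h3 : H.Adj (φ₂ ⟨x, hc₂⟩ : W) (φ₂ ⟨y, hy⟩ : W) := φ₂.map_rel_iff.mpr h2
      show H.Adj (φ₁ ⟨x, hc₁⟩ : W) (φ₂ ⟨y, hy⟩ : W)
      rw [hφ₁, ← hφ₂]
      exact h3
  have key : ∀ (a b : ↥(S₁ ∪ S₂)), H.Adj (f a : W) (f b : W) ↔ G.Adj (a : V) (b : V) := by
    intro a b
    obtain ⟨x, hx⟩ := a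
    obtain ⟨y, hy⟩ := b
    by_cases h1 : x ∈ S₁ <;> by_cases h2 : y ∈ S₁
    · rw [hf₁ x h1 hx, hf₁ y h2 hy]
      have := φ₁.map_rel_iff (a := ⟨x, h1⟩) (b := ⟨y, h2⟩)
      rw [SimpleGraph.comap_adj, SimpleGraph.comap_adj] at this
      exact this
    · have hy2 : y ∈ S₂ := hy.resolve_left h2
      rw [hf₁ x h1 hx, hf₂ y hy2 hy]
      exact mixed x y h1 hy2 h2
    · have hx2 : x ∈ S₂ := hx.resolve_left h1
      rw [hf₂ x hx2 hx, hf₁ y h2 hy]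
      rw [H.adj_comm, G.adj_comm]
      exact mixed y x h2 hx2 h1
    · have hx2 : x ∈ S₂ := hx.resolve_left h1
      have hy2 : y ∈ S₂ := hy.resolve_left h2
      rw [hf₂ x hx2 hx, hf₂ y hy2 hy]
      have := φ₂.map_rel_iff (a := ⟨x, hx2⟩) (b := ⟨y, hy2⟩)
      rw [SimpleGraph.comap_adj, SimpleGraph.comap_adj] at this
      exact this
  refine ⟨⟨⟨⟨f, g, hleft, hright⟩, ?_⟩, ?_, ?_⟩, ?_⟩
  · intro a b
    rw [SimpleGraph.comap_adj, SimpleGraph.comap_adj]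
    exact key a b
  · intro x hx
    exact hf₁ x hx _
  · intro x hx
    exact hf₂ x hx _
  -- connectivity
  · intro h1 h2
    let ι₁ : G.induce S₁ →g G.induce (S₁ ∪ S₂) :=
      ⟨fun x => ⟨x.1, Or.inl x.2⟩, fun {a b} h => by
        rw [SimpleGraph.comap_adj] at h ⊢; exact h⟩
    let ι₂ : G.induce S₂ →g G.induce (S₁ ∪ S₂) :=
      ⟨fun x => ⟨x.1, Or.inr x.2⟩, fun {a b} h => by
        rw [SimpleGraph.comap_adj] at h ⊢; exact h⟩
    have hreach : ∀ v : ↥(S₁ ∪ S₂), (G.induce (S₁ ∪ S₂)).Reachable v ⟨c, Or.inl hc₁⟩ := by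
      intro v
      obtain ⟨x, hx⟩ := v
      rcases hx with h | h
      · exact (h1.preconnected ⟨x, h⟩ ⟨c, hc₁⟩).map ι₁
      · exact (h2.preconnected ⟨x, h⟩ ⟨c, hc₂⟩).map ι₂
    rw [SimpleGraph.connected_iff]
    exact ⟨fun u v => (hreach u).trans (hreach v).symm, ⟨⟨c, Or.inl hc₁⟩⟩⟩
end
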